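/- Let N ∈ ℤ_{>0}. Then: (1) for every γ ∈ SL₂(ℤ) and g ∈ C(N), there exists h ∈ C(N) such that j(gγz) = j(hz) for all z ∈ ℍ; (2) for every γ ∈ SL₂(ℤ) and g, h ∈ C(N) with g ≠ h, the functions z ↦ j(gγz) and z ↦ j(hγz) on ℍ are not identically equal; (3) for every g, h ∈ C(N), there exists γ ∈ SL₂(ℤ) such that j(gγz) = j(hz) for all z ∈ ℍ. -/

import Mathlib

open UpperHalfPlane Matrix MatrixGroups Complex Filter Polynomial IntermediateField
open scoped Manifold Topology

noncomputable section

namespace SingMod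

/-- `ρ = exp(2πi/3)` as a point of the upper half plane. -/
def rho : UpperHalfPlane := ⟨Complex.exp (2 * Real.pi * Complex.I / 3), by
  rw [Complex.exp_im]
  have h1 : (2 * (Real.pi : ℂ) * Complex.I / 3).re = 0 := by simp
  have h2 : (2 * (Real.pi : ℂ) * Complex.I / 3).im = 2 * Real.pi / 3 := by simp
  rw [h1, h2, Real.exp_zero, one_mul]
  apply Real.sin_pos_of_pos_of_lt_pi
  · positivity
  · nlinarith [Real.pi_pos]⟩

/-- The characterizing properties of the modular `j`-function: it is holomorphic on `ℍ`,
invariant under the action of `SL₂(ℤ)`, has a simple pole at `i∞`, and satisfies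
`j(i) = 1728` and `j(ρ) = 0`. -/
structure IsJFunction (j : UpperHalfPlane → ℂ) : Prop where
  holo : MDifferentiable 𝓘(ℂ) 𝓘(ℂ) j
  invariant : ∀ (γ : SL(2, ℤ)) (z : UpperHalfPlane), j (γ • z) = j z
  simple_pole : ∃ c : ℂ, c ≠ 0 ∧
    Filter.Tendsto (fun z : UpperHalfPlane => j z * Complex.exp (2 * Real.pi * Complex.I * z))
      UpperHalfPlane.atImInfty (nhds c)
  at_I : j UpperHalfPlane.I = 1728
  at_rho : j rho = 0

/-- `x` is a singular modulus (w.r.t. a function `j`): `x = j τ` for some `τ ∈ ℍ` with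
`[ℚ(τ) : ℚ] = 2`. -/
def IsSingularModulus (j : UpperHalfPlane → ℂ) (x : ℂ) : Prop :=
  ∃ τ : UpperHalfPlane, Module.finrank ℚ ℚ⟮(τ : ℂ)⟯ = 2 ∧ j τ = x

/-- `D` is the discriminant of the singular modulus `x`: `D = b² - 4ac` where `a, b, c` are
coprime integers, not all zero, with `aτ² + bτ + c = 0` for some `τ ∈ ℍ` with `j τ = x`. -/
def IsDiscOf (j : UpperHalfPlane → ℂ) (D : ℤ) (x : ℂ) : Prop :=
  ∃ (τ : UpperHalfPlane) (a b c : ℤ), j τ = x ∧ Int.gcd (Int.gcd a b) c = 1 ∧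
    (a : ℂ) * (τ : ℂ) ^ 2 + (b : ℂ) * (τ : ℂ) + (c : ℂ) = 0 ∧ D = b ^ 2 - 4 * a * c

lemma det_map_cast (g : Matrix (Fin 2) (Fin 2) ℚ) :
    (g.map ((↑) : ℚ → ℝ)).det = (g.det : ℝ) := by
  rw [show ((↑) : ℚ → ℝ) = ⇑(Rat.castHom ℝ) from rfl, ← RingHom.mapMatrix_apply,
    ← RingHom.map_det]

/-- A rational `2×2` matrix of positive determinant, as an element of `GL(2,ℝ)⁺`. -/
def toGLPos (g : Matrix (Fin 2) (Fin 2) ℚ) (hg : 0 < g.det) : GL(2, ℝ)⁺ :=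
  ⟨Matrix.GeneralLinearGroup.mkOfDetNeZero (g.map ((↑) : ℚ → ℝ))
      (by rw [det_map_cast]; exact_mod_cast ne_of_gt hg),
   by
    rw [Matrix.mem_glpos, Matrix.GeneralLinearGroup.val_det_apply]
    show (0 : ℝ) < (g.map ((↑) : ℚ → ℝ)).det
    rw [det_map_cast]
    exact_mod_cast hg⟩

set_option synthInstance.maxHeartbeats 400000 in
/-- The action of a rational matrix of positive determinant on `ℍ` by fractional linear
transformations. -/
def qSMul (g : Matrix (Fin 2) (Fin 2) ℚ) (hg : 0 < g.det) (z : UpperHalfPlane) :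
    UpperHalfPlane :=
  toGLPos g hg • z

/-- The action of an integer matrix of positive determinant on `ℍ` by fractional linear
transformations. -/
def zSMul (g : Matrix (Fin 2) (Fin 2) ℤ) (hg : 0 < g.det) (z : UpperHalfPlane) :
    UpperHalfPlane :=
  qSMul (g.map ((↑) : ℤ → ℚ))
    (by
      have : (g.map ((↑) : ℤ → ℚ)).det = (g.det : ℚ) := by
        rw [show ((↑) : ℤ → ℚ) = ⇑(Int.castRingHom ℚ) from rfl, ← RingHom.mapMatrix_apply,
          ← RingHom.map_det]
      rw [this]; exact_mod_cast hg) z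

/-- The action of an arbitrary integer matrix on `ℍ`: fractional linear transformation when the
determinant is positive, junk value otherwise. -/
def act (g : Matrix (Fin 2) (Fin 2) ℤ) (z : UpperHalfPlane) : UpperHalfPlane :=
  if hg : 0 < g.det then zSMul g hg z else z

/-- The set `C(N)` of upper-triangular integer matrices `((a,b),(0,d))` with `ad = N`, `a > 0`,
`0 ≤ b < d` and `gcd(a,b,d) = 1`. -/
def Cset (N : ℤ) : Set (Matrix (Fin 2) (Fin 2) ℤ) :=
  {g | g 1 0 = 0 ∧ g 0 0 * g 1 1 = N ∧ 0 < g 0 0 ∧ 0 ≤ g 0 1 ∧ g 0 1 < g 1 1 ∧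
    Int.gcd (Int.gcd (g 0 0) (g 0 1)) (g 1 1) = 1}

/-- The statement that `Φ` is the family of modular polynomials (w.r.t. `j`):
for each `N > 0`, `Φ N` is a two-variable integer polynomial with
`Φ_N(X, j(z)) = ∏_{g ∈ C(N)} (X - j(gz))` for all `z ∈ ℍ` and `X ∈ ℂ`. -/
def IsModularPolyFamily (j : UpperHalfPlane → ℂ) (Φ : ℤ → MvPolynomial (Fin 2) ℤ) : Prop :=
  ∀ N : ℤ, 0 < N → ∀ (z : UpperHalfPlane) (X : ℂ),
    MvPolynomial.aeval ![X, j z] (Φ N) = ∏ᶠ g ∈ Cset N, (X - j (act g z))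

/-- The polynomial `F_N(X) = Φ_N(X, X)`, as a one-variable integer polynomial. -/
def FPoly (Φ : ℤ → MvPolynomial (Fin 2) ℤ) (N : ℤ) : Polynomial ℤ :=
  MvPolynomial.aeval (fun _ : Fin 2 => (Polynomial.X : Polynomial ℤ)) (Φ N)

/-- A function `ℍ → ℂ` is constant. -/
def IsConstFun (f : UpperHalfPlane → ℂ) : Prop := ∃ c : ℂ, ∀ z, f z = c

/-- `f` is a `j`-map: either constantly equal to a singular modulus, or of the form
`z ↦ j (g z)` for some `g ∈ GL₂⁺(ℚ)`. -/
def IsJMap (j : UpperHalfPlane → ℂ) (f : UpperHalfPlane → ℂ) : Prop :=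
  (∃ x : ℂ, IsSingularModulus j x ∧ ∀ z, f z = x) ∨
  (∃ (g : Matrix (Fin 2) (Fin 2) ℚ) (hg : 0 < g.det), ∀ z, f z = j (qSMul g hg z))

/-- `T ⊆ ℂ^{n+1}` is a multiplicative special curve: `T` is the image of
`z ↦ (f₁(z), …, fₙ(z), f(z))` for pairwise distinct `j`-maps `f₁, …, fₙ, f`, at least one
non-constant, such that `∏ᵢ (fᵢ(z) - f(z))^{aᵢ} = 1` for all `z` and some nonzero integers `aᵢ`. -/
def IsMultSpecialCurve (j : UpperHalfPlane → ℂ) (n : ℕ) (T : Set (Fin (n + 1) → ℂ)) : Prop :=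
  ∃ (f : Fin n → UpperHalfPlane → ℂ) (f₀ : UpperHalfPlane → ℂ),
    (∀ i, IsJMap j (f i)) ∧ IsJMap j f₀ ∧
    (∀ i k, i ≠ k → f i ≠ f k) ∧ (∀ i, f i ≠ f₀) ∧
    ((∃ i, ¬ IsConstFun (f i)) ∨ ¬ IsConstFun f₀) ∧
    (∃ a : Fin n → ℤ, (∀ i, a i ≠ 0) ∧
      ∀ z, ∏ i : Fin n, (f i z - f₀ z) ^ (a i) = 1) ∧
    T = {v | ∃ z : UpperHalfPlane, v = Fin.snoc (fun i => f i z) (f₀ z)}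

/-- A finite set `S ⊂ ℂ` is multiplicatively dependent. -/
def IsMultDep (S : Finset ℂ) : Prop :=
  ∃ a : ℂ → ℤ, (∃ x ∈ S, a x ≠ 0) ∧ ∏ x ∈ S, x ^ (a x) = 1

/-- A finite set `S ⊂ ℂ` is minimally multiplicatively dependent: it is multiplicatively
dependent and no non-empty proper subset of it is multiplicatively dependent. -/
def IsMinMultDep (S : Finset ℂ) : Prop :=
  IsMultDep S ∧ ∀ T : Finset ℂ, T ⊂ S → T.Nonempty → ¬ IsMultDep T

/-- Functions `h₁, …, hₙ : ℍ → ℂ` are multiplicatively independent modulo constants. -/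
def MultIndepModConst {n : ℕ} (h : Fin n → UpperHalfPlane → ℂ) : Prop :=
  ∀ a : Fin n → ℤ, (∃ i, a i ≠ 0) → ¬ IsConstFun (fun z => ∏ i : Fin n, (h i z) ^ (a i))

/-- The fundamental domain `𝔉_j` for the action of `SL₂(ℤ)` on `ℍ`. -/
def Fdj : Set UpperHalfPlane :=
  {z | -(1/2) ≤ z.re ∧ z.re < 1/2 ∧ 1 ≤ ‖(z : ℂ)‖ ∧
    (‖(z : ℂ)‖ = 1 → z.re ≤ 0)}


/-! ### Auxiliary lemmas -/

lemma coe_toGLPos (g : Matrix (Fin 2) (Fin 2) ℚ) (hg : 0 < g.det) :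
    ((toGLPos g hg : GL (Fin 2) ℝ) : Matrix (Fin 2) (Fin 2) ℝ) = g.map ((↑) : ℚ → ℝ) := rfl

lemma toGLPos_mul (g h : Matrix (Fin 2) (Fin 2) ℚ) (hg : 0 < g.det) (hh : 0 < h.det)
    (hgh : 0 < (g * h).det) :
    toGLPos (g * h) hgh = toGLPos g hg * toGLPos h hh := by
  apply Subtype.ext
  apply Units.ext
  show (g * h).map ((↑) : ℚ → ℝ) = (g.map ((↑) : ℚ → ℝ)) * (h.map ((↑) : ℚ → ℝ))
  rw [show ((↑) : ℚ → ℝ) = ⇑(Rat.castHom ℝ) from rfl]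
  exact Matrix.map_mul

lemma act_pos_def (g : Matrix (Fin 2) (Fin 2) ℤ) (hg : 0 < g.det) (z : UpperHalfPlane) :
    act g z = zSMul g hg z := dif_pos hg

lemma act_mul (g h : Matrix (Fin 2) (Fin 2) ℤ) (hg : 0 < g.det) (hh : 0 < h.det)
    (z : UpperHalfPlane) : act (g * h) z = act g (act h z) := by
  have hgh : 0 < (g * h).det := by rw [Matrix.det_mul]; exact mul_pos hg hh
  rw [act_pos_def _ hg, act_pos_def _ hh, act_pos_def _ hgh]
  unfold zSMul qSMul
  have hmap : ∀ (m : Matrix (Fin 2) (Fin 2) ℤ), 0 < m.det →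
      0 < (m.map ((↑) : ℤ → ℚ)).det := by
    intro m hm
    have : (m.map ((↑) : ℤ → ℚ)).det = (m.det : ℚ) := by
      rw [show ((↑) : ℤ → ℚ) = ⇑(Int.castRingHom ℚ) from rfl, ← RingHom.mapMatrix_apply,
        ← RingHom.map_det]
    rw [this]; exact_mod_cast hm
  have hmul : (g * h).map ((↑) : ℤ → ℚ) = g.map ((↑) : ℤ → ℚ) * h.map ((↑) : ℤ → ℚ) := by
    rw [show ((↑) : ℤ → ℚ) = ⇑(Int.castRingHom ℚ) from rfl]
    exact Matrix.map_mul
  have h1 := hmap g hg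
  have h2 := hmap h hh
  have h3 : 0 < (g.map ((↑) : ℤ → ℚ) * h.map ((↑) : ℤ → ℚ)).det := by
    rw [Matrix.det_mul]; exact mul_pos h1 h2
  simp only [hmul]
  rw [toGLPos_mul _ _ h1 h2 h3, mul_smul]

set_option synthInstance.maxHeartbeats 1000000

lemma sl_smul_eq_act (γ : SL(2, ℤ)) (z : UpperHalfPlane) :
    γ • z = act ((γ : Matrix (Fin 2) (Fin 2) ℤ)) z := by
  have hd : (0:ℤ) < ((γ : Matrix (Fin 2) (Fin 2) ℤ)).det := by
    rw [γ.2]; norm_num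
  rw [act_pos_def _ hd]
  apply UpperHalfPlane.ext
  rw [UpperHalfPlane.specialLinearGroup_apply]
  unfold zSMul qSMul
  rw [Subgroup.smul_def, UpperHalfPlane.coe_smul_of_det_pos ((Matrix.mem_glpos _).1 (toGLPos _ _).2)]
  simp only [UpperHalfPlane.num, UpperHalfPlane.denom, coe_toGLPos, Matrix.map_apply,
    UpperHalfPlane.coe_mk]
  push_cast
  norm_num

lemma coe_act (g : Matrix (Fin 2) (Fin 2) ℤ) (hg : 0 < g.det) (z : UpperHalfPlane) :
    (act g z : ℂ) = ((g 0 0 : ℂ) * z + g 0 1) / ((g 1 0 : ℂ) * z + g 1 1) := by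
  rw [act_pos_def _ hg]
  unfold zSMul qSMul
  rw [Subgroup.smul_def, UpperHalfPlane.coe_smul_of_det_pos ((Matrix.mem_glpos _).1 (toGLPos _ _).2)]
  simp only [UpperHalfPlane.num, UpperHalfPlane.denom, coe_toGLPos, Matrix.map_apply]
  push_cast
  norm_num

/-- The content (gcd of all entries) of a 2×2 integer matrix. -/
def cont (M : Matrix (Fin 2) (Fin 2) ℤ) : ℕ :=
  Int.gcd (Int.gcd (Int.gcd (M 0 0) (M 0 1)) (M 1 0)) (M 1 1)

lemma cont_dvd_entries (M : Matrix (Fin 2) (Fin 2) ℤ) (i j : Fin 2) :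
    ((cont M : ℤ)) ∣ M i j := by
  have h00 : ((cont M : ℤ)) ∣ M 0 0 :=
    dvd_trans (dvd_trans (Int.gcd_dvd_left _ _) (Int.natCast_dvd_natCast.mpr
      (Nat.dvd_refl _))) (dvd_trans (Int.gcd_dvd_left _ _) (Int.gcd_dvd_left _ _))
  have h01 : ((cont M : ℤ)) ∣ M 0 1 :=
    dvd_trans (Int.gcd_dvd_left _ _) (dvd_trans (Int.gcd_dvd_left _ _) (Int.gcd_dvd_right _ _))
  have h10 : ((cont M : ℤ)) ∣ M 1 0 := dvd_trans (Int.gcd_dvd_left _ _) (Int.gcd_dvd_right _ _)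
  have h11 : ((cont M : ℤ)) ∣ M 1 1 := Int.gcd_dvd_right _ _
  fin_cases i <;> fin_cases j <;> assumption

lemma dvd_cont (M : Matrix (Fin 2) (Fin 2) ℤ) (r : ℤ) (h : ∀ i j, r ∣ M i j) :
    r ∣ (cont M : ℤ) :=
  Int.dvd_coe_gcd (Int.dvd_coe_gcd (Int.dvd_coe_gcd (h 0 0) (h 0 1)) (h 1 0)) (h 1 1)

lemma cont_dvd_mul_left (B M : Matrix (Fin 2) (Fin 2) ℤ) :
    ((cont M : ℤ)) ∣ (cont (B * M) : ℤ) := by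
  refine dvd_cont _ _ fun i j => ?_
  rw [Matrix.mul_apply, Fin.sum_univ_two]
  exact dvd_add ((cont_dvd_entries M 0 j).mul_left _) ((cont_dvd_entries M 1 j).mul_left _)

lemma cont_dvd_mul_right (M B : Matrix (Fin 2) (Fin 2) ℤ) :
    ((cont M : ℤ)) ∣ (cont (M * B) : ℤ) := by
  refine dvd_cont _ _ fun i j => ?_
  rw [Matrix.mul_apply, Fin.sum_univ_two]
  exact dvd_add ((cont_dvd_entries M i 0).mul_right _) ((cont_dvd_entries M i 1).mul_right _)

lemma inv_coe_mul_cancel (A : SL(2, ℤ)) (M : Matrix (Fin 2) (Fin 2) ℤ) :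
    (A⁻¹ : SL(2, ℤ)).1 * ((A : SL(2, ℤ)).1 * M) = M := by
  rw [← mul_assoc, ← Matrix.SpecialLinearGroup.coe_mul, inv_mul_cancel,
    Matrix.SpecialLinearGroup.coe_one, one_mul]

lemma mul_inv_coe_cancel (A : SL(2, ℤ)) (M : Matrix (Fin 2) (Fin 2) ℤ) :
    (M * (A : SL(2, ℤ)).1) * (A⁻¹ : SL(2, ℤ)).1 = M := by
  rw [mul_assoc, ← Matrix.SpecialLinearGroup.coe_mul, mul_inv_cancel,
    Matrix.SpecialLinearGroup.coe_one, mul_one]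

lemma cont_mul_left (A : SL(2, ℤ)) (M : Matrix (Fin 2) (Fin 2) ℤ) :
    cont ((A : SL(2, ℤ)).1 * M) = cont M := by
  apply Nat.dvd_antisymm
  · rw [← Int.natCast_dvd_natCast]
    have := cont_dvd_mul_left (A⁻¹ : SL(2, ℤ)).1 ((A : SL(2, ℤ)).1 * M)
    rwa [inv_coe_mul_cancel] at this
  · rw [← Int.natCast_dvd_natCast]
    exact cont_dvd_mul_left _ _

lemma cont_mul_right (A : SL(2, ℤ)) (M : Matrix (Fin 2) (Fin 2) ℤ) :
    cont (M * (A : SL(2, ℤ)).1) = cont M := by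
  apply Nat.dvd_antisymm
  · rw [← Int.natCast_dvd_natCast]
    have := cont_dvd_mul_right (M * (A : SL(2, ℤ)).1) (A⁻¹ : SL(2, ℤ)).1
    rwa [mul_inv_coe_cancel] at this
  · rw [← Int.natCast_dvd_natCast]
    exact cont_dvd_mul_right _ _

lemma cont_of_upper (M : Matrix (Fin 2) (Fin 2) ℤ) (h : M 1 0 = 0) :
    cont M = Int.gcd (Int.gcd (M 0 0) (M 0 1)) (M 1 1) := by
  unfold cont
  rw [h, Int.gcd_zero_right, Int.natAbs_natCast]

lemma det_of_mem_Cset {N : ℤ} {g : Matrix (Fin 2) (Fin 2) ℤ} (hg : g ∈ Cset N) : g.det = N := by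
  rw [Matrix.det_fin_two, hg.1, mul_zero, sub_zero]
  exact hg.2.1

lemma cont_of_mem_Cset {N : ℤ} {g : Matrix (Fin 2) (Fin 2) ℤ} (hg : g ∈ Cset N) :
    cont g = 1 := by
  rw [cont_of_upper g hg.1]
  exact hg.2.2.2.2.2

lemma hermite (M : Matrix (Fin 2) (Fin 2) ℤ) (hdet : 0 < M.det) (hc : cont M = 1) :
    ∃ (δ : SL(2, ℤ)) (h : Matrix (Fin 2) (Fin 2) ℤ), h ∈ Cset M.det ∧ M = δ.1 * h := by
  set a := M 0 0 with ha_def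
  set c := M 1 0 with hc_def
  have hac : a ≠ 0 ∨ c ≠ 0 := by
    by_contra hcon
    push_neg at hcon
    rw [Matrix.det_fin_two, ← ha_def, ← hc_def, hcon.1, hcon.2, zero_mul, mul_zero,
      sub_zero] at hdet
    exact lt_irrefl 0 hdet
  set e : ℕ := Int.gcd a c with he_def
  have he_pos : 0 < e := Int.gcd_pos_iff.mpr hac
  have heZ : (0 : ℤ) < (e : ℤ) := by exact_mod_cast he_pos
  set u := Int.gcdA a c with hu_def
  set v := Int.gcdB a c with hv_def
  have hbez : (e : ℤ) = a * u + c * v := Int.gcd_eq_gcd_ab a c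
  set a1 := a / (e : ℤ) with ha1_def
  set c1 := c / (e : ℤ) with hc1_def
  have ha1 : (e : ℤ) * a1 = a := Int.mul_ediv_cancel' (Int.gcd_dvd_left _ _)
  have hc1 : (e : ℤ) * c1 = c := Int.mul_ediv_cancel' (Int.gcd_dvd_right _ _)
  have hdet1 : u * a1 + v * c1 = 1 := by
    have h1 : (e : ℤ) * (u * a1 + v * c1) = (e : ℤ) * 1 := by
      rw [mul_one]
      calc (e : ℤ) * (u * a1 + v * c1) = u * ((e:ℤ) * a1) + v * ((e:ℤ) * c1) := by ring
        _ = u * a + v * c := by rw [ha1, hc1]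
        _ = (e : ℤ) := by rw [hbez]; ring
    exact mul_left_cancel₀ (ne_of_gt heZ) h1
  set γ₁ : SL(2, ℤ) := ⟨!![u, v; -c1, a1], by
    rw [Matrix.det_fin_two_of]; linear_combination hdet1⟩ with hγ₁_def
  set P := (γ₁ : SL(2, ℤ)).1 * M with hP_def
  have hP00 : P 0 0 = (e : ℤ) := by
    rw [hP_def]
    simp [Matrix.mul_apply, Fin.sum_univ_two, hγ₁_def]
    rw [hbez]; ring
  have hP10 : P 1 0 = 0 := by
    rw [hP_def]
    simp only [Matrix.mul_apply, Fin.sum_univ_two, hγ₁_def, Matrix.cons_val_zero,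
      Matrix.cons_val_one, Matrix.head_cons, Matrix.of_apply, Matrix.cons_val', Matrix.head_fin_const,
      Matrix.empty_val', Matrix.cons_val_fin_one]
    linear_combination c1 * ha1 - a1 * hc1
  have hPdet : P.det = M.det := by
    rw [hP_def, Matrix.det_mul, γ₁.2, one_mul]
  set d0 := P 1 1 with hd0_def
  set b0 := P 0 1 with hb0_def
  have hed0 : (e : ℤ) * d0 = M.det := by
    rw [← hPdet, Matrix.det_fin_two, hP10, ← hP00, ← hd0_def, ← hb0_def]
    ring
  have hd0_pos : 0 < d0 := by
    nlinarith
  set k := b0 / d0 with hk_def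
  set γ₂ : SL(2, ℤ) := ⟨!![1, -k; 0, 1], by rw [Matrix.det_fin_two_of]; ring⟩ with hγ₂_def
  set h : Matrix (Fin 2) (Fin 2) ℤ := !![(e : ℤ), b0 % d0; 0, d0] with hh_def
  have hkey : ((γ₂ * γ₁ : SL(2, ℤ)) : Matrix (Fin 2) (Fin 2) ℤ) * M = h := by
    rw [Matrix.SpecialLinearGroup.coe_mul, mul_assoc, ← hP_def]
    ext i j
    fin_cases i <;> fin_cases j <;>
      simp [hh_def, Matrix.mul_apply, Fin.sum_univ_two, hγ₂_def, hP10, hP00, ← hd0_def,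
        ← hb0_def, Int.emod_def, hk_def] <;> ring
  have hMeq : M = ((γ₂ * γ₁)⁻¹ : SL(2, ℤ)).1 * h := by
    rw [← hkey, inv_coe_mul_cancel]
  refine ⟨(γ₂ * γ₁)⁻¹, h, ?_, hMeq⟩
  have hconth : cont h = 1 := by
    rw [← hkey, cont_mul_left, hc]
  refine ⟨?_, ?_, ?_, ?_, ?_, ?_⟩
  · simp [hh_def]
  · simpa [hh_def] using hed0
  · simpa [hh_def] using heZ
  · simpa [hh_def] using Int.emod_nonneg b0 (ne_of_gt hd0_pos)
  · simpa [hh_def] using Int.emod_lt_of_pos b0 hd0_pos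
  · have h10 : h 1 0 = 0 := by simp [hh_def]
    rw [← cont_of_upper h h10]
    exact hconth

lemma exists_coprime_shift (a b d : ℤ) (ha : 0 < a)
    (h : Int.gcd (Int.gcd a b) d = 1) : ∃ t : ℤ, Int.gcd a (b + t * d) = 1 := by
  classical
  set T : ℕ := ∏ p ∈ Finset.filter (fun p : ℕ => ¬ ((p : ℤ) ∣ b)) a.natAbs.primeFactors, (p : ℕ) with hT_def
  refine ⟨(T : ℤ), ?_⟩
  by_contra hne
  obtain ⟨p, hp, hpdvd⟩ := Nat.exists_prime_and_dvd hne
  have hpa : (p : ℤ) ∣ a :=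
    dvd_trans (Int.natCast_dvd_natCast.mpr hpdvd) (Int.gcd_dvd_left _ _)
  have hpbd : (p : ℤ) ∣ b + (T : ℤ) * d :=
    dvd_trans (Int.natCast_dvd_natCast.mpr hpdvd) (Int.gcd_dvd_right _ _)
  have hpZ : Prime (p : ℤ) := Nat.prime_iff_prime_int.mp hp
  by_cases hpb : (p : ℤ) ∣ b
  · have hpnd : ¬ (p : ℤ) ∣ d := by
      intro hpd
      have h2 : (p : ℤ) ∣ (Int.gcd (Int.gcd a b) d : ℤ) :=
        Int.dvd_coe_gcd (Int.dvd_coe_gcd hpa hpb) hpd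
      rw [h] at h2
      have := Int.le_of_dvd one_pos h2
      exact absurd (by exact_mod_cast this) (Nat.Prime.one_lt hp).not_ge
    have hpnT : ¬ p ∣ T := by
      intro hpT
      have hcop : Nat.Coprime p T := by
        apply Nat.Coprime.prod_right
        intro q hq
        rw [Finset.mem_filter] at hq
        have hq_prime : q.Prime := Nat.prime_of_mem_primeFactors hq.1
        refine (Nat.coprime_primes hp hq_prime).mpr fun hpq => ?_
        exact hq.2 (hpq ▸ hpb)
      have h1 : p ∣ Nat.gcd p T := Nat.dvd_gcd dvd_rfl hpT
      rw [Nat.Coprime] at hcop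
      rw [hcop] at h1
      exact hp.one_lt.ne' (Nat.eq_one_of_dvd_one h1)
    have hpTd : (p : ℤ) ∣ (T : ℤ) * d := by
      have h1 : (p : ℤ) ∣ (b + (T : ℤ) * d) - b := dvd_sub hpbd hpb
      simpa using h1
    rcases hpZ.dvd_mul.mp hpTd with h1 | h1
    · exact hpnT (by exact_mod_cast h1)
    · exact hpnd h1
  · have hmem : p ∈ Finset.filter (fun p : ℕ => ¬ ((p : ℤ) ∣ b)) a.natAbs.primeFactors := by
      rw [Finset.mem_filter, Nat.mem_primeFactors]
      refine ⟨⟨hp, ?_, ?_⟩, hpb⟩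
      · exact Int.natCast_dvd.mp hpa
      · simpa using ha.ne'
    have hpT : p ∣ T := Finset.dvd_prod_of_mem _ hmem
    have hpTd : (p : ℤ) ∣ (T : ℤ) * d := ((Int.natCast_dvd_natCast.mpr hpT).mul_right d)
    have h1 : (p : ℤ) ∣ b := by
      have := dvd_sub hpbd hpTd
      simpa using this
    exact hpb h1

lemma smith (M : Matrix (Fin 2) (Fin 2) ℤ) (hdet : 0 < M.det) (hc : cont M = 1) :
    ∃ γ δ : SL(2, ℤ), (γ : SL(2, ℤ)).1 * M * (δ : SL(2, ℤ)).1 = !![1, 0; 0, M.det] := by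
  obtain ⟨δ₀, h, hmem, hMeq⟩ := hermite M hdet hc
  set N := M.det with hN_def
  set a := h 0 0 with ha_def
  set b := h 0 1 with hb_def
  set d := h 1 1 with hd_def
  have h10 : h 1 0 = 0 := hmem.1
  have had : a * d = N := hmem.2.1
  have ha : 0 < a := hmem.2.2.1
  have hgcd : Int.gcd (Int.gcd a b) d = 1 := hmem.2.2.2.2.2
  obtain ⟨t, ht⟩ := exists_coprime_shift a b d ha hgcd
  set x := Int.gcdA a (b + t * d) with hx_def
  set y := Int.gcdB a (b + t * d) with hy_def
  have hbez : (1 : ℤ) = a * x + (b + t * d) * y := by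
    have h1 := Int.gcd_eq_gcd_ab a (b + t * d)
    rw [ht] at h1
    exact_mod_cast h1
  set U : SL(2, ℤ) := ⟨!![1, t; 0, 1], by rw [Matrix.det_fin_two_of]; ring⟩ with hU_def
  set V : SL(2, ℤ) := ⟨!![x, -(b + t * d); y, a], by
    rw [Matrix.det_fin_two_of]; linear_combination -hbez⟩ with hV_def
  set W : SL(2, ℤ) := ⟨!![1, 0; -(d * y), 1], by rw [Matrix.det_fin_two_of]; ring⟩ with hW_def
  have hkey : (W * U : SL(2, ℤ)).1 * h * (V : SL(2, ℤ)).1 = !![1, 0; 0, N] := by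
    rw [Matrix.SpecialLinearGroup.coe_mul]
    ext i j
    fin_cases i <;> fin_cases j
    · simp only [hW_def, hU_def, hV_def, Matrix.mul_apply, Fin.sum_univ_two,
        Matrix.cons_val_zero, Matrix.cons_val_one, Matrix.head_cons, Matrix.of_apply,
        Matrix.cons_val', Matrix.head_fin_const, Matrix.empty_val', Matrix.cons_val_fin_one,
        Fin.mk_zero, Fin.mk_one, h10, ← ha_def, ← hb_def, ← hd_def]
      linear_combination -hbez
    · simp only [hW_def, hU_def, hV_def, Matrix.mul_apply, Fin.sum_univ_two,
        Matrix.cons_val_zero, Matrix.cons_val_one, Matrix.head_cons, Matrix.of_apply,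
        Matrix.cons_val', Matrix.head_fin_const, Matrix.empty_val', Matrix.cons_val_fin_one,
        Fin.mk_zero, Fin.mk_one, h10, ← ha_def, ← hb_def, ← hd_def]
      ring
    · simp only [hW_def, hU_def, hV_def, Matrix.mul_apply, Fin.sum_univ_two,
        Matrix.cons_val_zero, Matrix.cons_val_one, Matrix.head_cons, Matrix.of_apply,
        Matrix.cons_val', Matrix.head_fin_const, Matrix.empty_val', Matrix.cons_val_fin_one,
        Fin.mk_zero, Fin.mk_one, h10, ← ha_def, ← hb_def, ← hd_def]
      linear_combination d * y * hbez
    · simp only [hW_def, hU_def, hV_def, Matrix.mul_apply, Fin.sum_univ_two,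
        Matrix.cons_val_zero, Matrix.cons_val_one, Matrix.head_cons, Matrix.of_apply,
        Matrix.cons_val', Matrix.head_fin_const, Matrix.empty_val', Matrix.cons_val_fin_one,
        Fin.mk_zero, Fin.mk_one, h10, ← ha_def, ← hb_def, ← hd_def]
      linear_combination had
  have hh2 : ((δ₀⁻¹ : SL(2, ℤ)) : Matrix (Fin 2) (Fin 2) ℤ) * M = h := by
    rw [hMeq]
    exact inv_coe_mul_cancel δ₀ h
  refine ⟨W * U * δ₀⁻¹, V, ?_⟩
  calc ((W * U * δ₀⁻¹ : SL(2, ℤ)) : Matrix (Fin 2) (Fin 2) ℤ) * M * (V : SL(2, ℤ)).1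
      = (W * U : SL(2, ℤ)).1 * (((δ₀⁻¹ : SL(2, ℤ)) : Matrix (Fin 2) (Fin 2) ℤ) * M)
        * (V : SL(2, ℤ)).1 := by
        rw [Matrix.SpecialLinearGroup.coe_mul, mul_assoc _ _ M]
    _ = (W * U : SL(2, ℤ)).1 * h * (V : SL(2, ℤ)).1 := by rw [hh2]
    _ = !![1, 0; 0, N] := hkey

lemma atImInfty_neBot : (UpperHalfPlane.atImInfty).NeBot := by
  rw [UpperHalfPlane.atImInfty]
  apply Filter.comap_neBot
  intro s hs
  rw [Filter.mem_atTop_sets] at hs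
  obtain ⟨A, hA⟩ := hs
  refine ⟨⟨⟨0, max A 1⟩, ?_⟩, ?_⟩
  · exact lt_max_of_lt_right one_pos
  · exact hA _ (le_max_left A 1)

lemma tendsto_im_atImInfty :
    Filter.Tendsto UpperHalfPlane.im UpperHalfPlane.atImInfty Filter.atTop := by
  rw [UpperHalfPlane.atImInfty]
  exact Filter.tendsto_comap

lemma act_im {N : ℤ} (hN : 0 < N) {g : Matrix (Fin 2) (Fin 2) ℤ} (hg : g ∈ Cset N)
    (z : UpperHalfPlane) :
    (act g z).im = (g 0 0 : ℝ) / (g 1 1 : ℝ) * z.im := by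
  have hdet : 0 < g.det := by rw [det_of_mem_Cset hg]; exact hN
  have hD : (0:ℤ) < g 1 1 := by nlinarith [hg.2.1, hg.2.2.1]
  rw [← UpperHalfPlane.coe_im, coe_act g hdet z, hg.1]
  rw [Int.cast_zero, zero_mul, zero_add]
  rw [show ((g 1 1 : ℤ) : ℂ) = (((g 1 1 : ℤ) : ℝ) : ℂ) by push_cast; ring]
  rw [Complex.div_ofReal_im]
  rw [show ((g 0 0 : ℤ) : ℂ) = (((g 0 0 : ℤ) : ℝ) : ℂ) by push_cast; ring,
    show ((g 0 1 : ℤ) : ℂ) = (((g 0 1 : ℤ) : ℝ) : ℂ) by push_cast; ring]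
  simp [Complex.add_im, Complex.mul_im, Complex.ofReal_im, Complex.ofReal_re,
    UpperHalfPlane.coe_im]
  ring

lemma tendsto_act_atImInfty {N : ℤ} (hN : 0 < N) {g : Matrix (Fin 2) (Fin 2) ℤ}
    (hg : g ∈ Cset N) :
    Filter.Tendsto (fun z => act g z) UpperHalfPlane.atImInfty UpperHalfPlane.atImInfty := by
  rw [UpperHalfPlane.atImInfty, Filter.tendsto_comap_iff]
  have hA : (0:ℤ) < g 0 0 := hg.2.2.1
  have hD : (0:ℤ) < g 1 1 := by nlinarith [hg.2.1]
  have hpos : 0 < (g 0 0 : ℝ) / (g 1 1 : ℝ) := by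
    apply div_pos <;> exact_mod_cast (by assumption)
  have heq : (UpperHalfPlane.im ∘ fun z => act g z) =
      fun z : UpperHalfPlane => (g 0 0 : ℝ) / (g 1 1 : ℝ) * z.im :=
    funext fun z => act_im hN hg z
  rw [heq]
  exact (tendsto_im_atImInfty).const_mul_atTop hpos

lemma act_sub_eq {N : ℤ} (hN : 0 < N) {g h : Matrix (Fin 2) (Fin 2) ℤ}
    (hg : g ∈ Cset N) (hh : h ∈ Cset N) (α β : ℝ)
    (hα : α = (g 0 0 : ℝ) / (g 1 1 : ℝ) - (h 0 0 : ℝ) / (h 1 1 : ℝ))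
    (hβ : β = (g 0 1 : ℝ) / (g 1 1 : ℝ) - (h 0 1 : ℝ) / (h 1 1 : ℝ))
    (z : UpperHalfPlane) :
    (act g z : ℂ) - (act h z : ℂ) = (α : ℂ) * z + (β : ℂ) := by
  have hdg : 0 < g.det := by rw [det_of_mem_Cset hg]; exact hN
  have hdh : 0 < h.det := by rw [det_of_mem_Cset hh]; exact hN
  have hDg : (0:ℤ) < g 1 1 := by nlinarith [hg.2.1, hg.2.2.1]
  have hDh : (0:ℤ) < h 1 1 := by nlinarith [hh.2.1, hh.2.2.1]
  have hDg' : ((g 1 1 : ℤ) : ℝ) ≠ 0 := by exact_mod_cast hDg.ne'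
  have hDh' : ((h 1 1 : ℤ) : ℝ) ≠ 0 := by exact_mod_cast hDh.ne'
  have hDgC : ((g 1 1 : ℤ) : ℂ) ≠ 0 := by exact_mod_cast hDg.ne'
  have hDhC : ((h 1 1 : ℤ) : ℂ) ≠ 0 := by exact_mod_cast hDh.ne'
  rw [coe_act g hdg z, coe_act h hdh z, hg.1, hh.1, hα, hβ]
  simp only [Int.cast_zero, zero_mul, zero_add]
  push_cast
  field_simp
  ring

lemma Cset_act_inj (j : UpperHalfPlane → ℂ) (hj : IsJFunction j) {N : ℤ} (hN : 0 < N)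
    {g h : Matrix (Fin 2) (Fin 2) ℤ} (hg : g ∈ Cset N) (hh : h ∈ Cset N)
    (heq : ∀ z, j (act g z) = j (act h z)) : g = h := by
  haveI := atImInfty_neBot
  obtain ⟨c, hc, hF⟩ := hj.simple_pole
  have hg_t : Filter.Tendsto
      (fun z : UpperHalfPlane =>
        j (act g z) * Complex.exp (2 * Real.pi * Complex.I * (act g z : ℂ)))
      UpperHalfPlane.atImInfty (nhds c) := hF.comp (tendsto_act_atImInfty hN hg)
  have hh_t : Filter.Tendsto
      (fun z : UpperHalfPlane =>
        j (act h z) * Complex.exp (2 * Real.pi * Complex.I * (act h z : ℂ)))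
      UpperHalfPlane.atImInfty (nhds c) := hF.comp (tendsto_act_atImInfty hN hh)
  set α : ℝ := (g 0 0 : ℝ) / (g 1 1 : ℝ) - (h 0 0 : ℝ) / (h 1 1 : ℝ) with hα
  set β : ℝ := (g 0 1 : ℝ) / (g 1 1 : ℝ) - (h 0 1 : ℝ) / (h 1 1 : ℝ) with hβ
  have hne0 : ∀ᶠ z in UpperHalfPlane.atImInfty, j (act h z) ≠ 0 := by
    have h1 : ∀ᶠ z in UpperHalfPlane.atImInfty,
        j (act h z) * Complex.exp (2 * Real.pi * Complex.I * (act h z : ℂ)) ≠ 0 :=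
      hh_t.eventually_ne hc
    filter_upwards [h1] with z hz h0
    exact hz (by rw [h0, zero_mul])
  have hratio : ∀ᶠ (z : UpperHalfPlane) in UpperHalfPlane.atImInfty,
      Complex.exp (2 * Real.pi * Complex.I * ((α : ℂ) * (z : ℂ) + (β : ℂ))) =
        (j (act g z) * Complex.exp (2 * Real.pi * Complex.I * (act g z : ℂ))) /
        (j (act h z) * Complex.exp (2 * Real.pi * Complex.I * (act h z : ℂ))) := by
    filter_upwards [hne0] with z hz
    rw [heq z, mul_div_mul_left _ _ hz, ← Complex.exp_sub, ← mul_sub,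
      act_sub_eq hN hg hh α β hα hβ z]
  have hlim : Filter.Tendsto
      (fun z : UpperHalfPlane => Complex.exp (2 * Real.pi * Complex.I * ((α : ℂ) * z + (β : ℂ))))
      UpperHalfPlane.atImInfty (nhds 1) := by
    rw [Filter.tendsto_congr' hratio]
    have := hg_t.div hh_t hc
    rwa [div_self hc] at this
  have hre : ∀ z : UpperHalfPlane,
      (2 * (Real.pi : ℂ) * Complex.I * ((α : ℂ) * z + (β : ℂ))).re =
        -(2 * Real.pi) * (α * z.im) := by
    intro z
    simp [Complex.mul_re, Complex.mul_im, Complex.add_re, Complex.add_im,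
      UpperHalfPlane.coe_im, UpperHalfPlane.coe_re]
    try ring
  have hnorm : Filter.Tendsto
      (fun z : UpperHalfPlane => Real.exp (-(2 * Real.pi) * (α * z.im)))
      UpperHalfPlane.atImInfty (nhds 1) := by
    have h1 := hlim.norm
    rw [norm_one] at h1
    exact h1.congr fun z => by rw [Complex.norm_exp, hre z]
  have hα0 : α = 0 := by
    by_contra hα0
    rcases lt_or_gt_of_ne hα0 with hneg | hpos
    · -- α < 0 : the exponent tends to +∞
      have h2 : Filter.Tendsto (fun z : UpperHalfPlane => -(2 * Real.pi) * (α * z.im))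
          UpperHalfPlane.atImInfty Filter.atTop := by
        have hc2 : 0 < -(2 * Real.pi) * α := by nlinarith [Real.pi_pos]
        have h3 := tendsto_im_atImInfty.const_mul_atTop hc2
        exact h3.congr fun z => by ring
      have h4 := Real.tendsto_exp_atTop.comp h2
      exact not_tendsto_nhds_of_tendsto_atTop h4 1 hnorm
    · -- α > 0 : the exponent tends to -∞, so exp tends to 0
      have h2 : Filter.Tendsto (fun z : UpperHalfPlane => -(2 * Real.pi) * (α * z.im))
          UpperHalfPlane.atImInfty Filter.atBot := by
        have hc2 : -(2 * Real.pi) * α < 0 := by nlinarith [Real.pi_pos]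
        have h3 := tendsto_im_atImInfty.const_mul_atTop_of_neg hc2
        exact h3.congr fun z => by ring
      have h4 := Real.tendsto_exp_atBot.comp h2
      have : (1 : ℝ) = 0 := tendsto_nhds_unique hnorm h4
      norm_num at this
  have hconst : Complex.exp (2 * Real.pi * Complex.I * (β : ℂ)) = 1 := by
    have h5 : (fun z : UpperHalfPlane =>
        Complex.exp (2 * Real.pi * Complex.I * ((α : ℂ) * z + (β : ℂ)))) =
        fun _ : UpperHalfPlane => Complex.exp (2 * Real.pi * Complex.I * (β : ℂ)) := by
      funext z
      rw [hα0]
      norm_num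
    rw [h5] at hlim
    exact tendsto_nhds_unique tendsto_const_nhds hlim
  obtain ⟨n, hn⟩ := Complex.exp_eq_one_iff.mp hconst
  have h2πI : (2 * (Real.pi : ℂ) * Complex.I) ≠ 0 := by
    simp [Complex.I_ne_zero, Real.pi_ne_zero, Complex.ofReal_ne_zero]
  have hβn : (β : ℂ) = (n : ℂ) := by
    apply mul_left_cancel₀ h2πI
    rw [hn]
    ring
  have hβr : β = (n : ℝ) := by exact_mod_cast hβn
  -- Now extract the integer identities
  have hA : (0:ℤ) < g 0 0 := hg.2.2.1
  have hA' : (0:ℤ) < h 0 0 := hh.2.2.1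
  have hAD : g 0 0 * g 1 1 = N := hg.2.1
  have hA'D' : h 0 0 * h 1 1 = N := hh.2.1
  have hD : (0:ℤ) < g 1 1 := by nlinarith
  have hD' : (0:ℤ) < h 1 1 := by nlinarith
  have hDr : ((g 1 1 : ℤ) : ℝ) ≠ 0 := by exact_mod_cast hD.ne'
  have hD'r : ((h 1 1 : ℤ) : ℝ) ≠ 0 := by exact_mod_cast hD'.ne'
  have hcross : g 0 0 * h 1 1 = h 0 0 * g 1 1 := by
    have h1 : (g 0 0 : ℝ) / (g 1 1 : ℝ) - (h 0 0 : ℝ) / (h 1 1 : ℝ) = 0 := by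
      rw [← hα]; exact hα0
    have h2 := sub_eq_zero.mp h1
    rw [div_eq_div_iff hDr hD'r] at h2
    exact_mod_cast h2
  have hAA' : g 0 0 = h 0 0 := by
    have hkey : (g 0 0 - h 0 0) * (g 1 1 + h 1 1) = 0 := by
      linear_combination hAD - hA'D' + hcross
    rcases mul_eq_zero.mp hkey with h1 | h1
    · linarith
    · linarith
  have hDD' : g 1 1 = h 1 1 := by
    have h2 : g 0 0 * g 1 1 = g 0 0 * h 1 1 := by
      rw [hAD, hAA']; exact hA'D'.symm
    exact mul_left_cancel₀ (ne_of_gt hA) h2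
  have hBB' : g 0 1 - h 0 1 = n * g 1 1 := by
    have h1 : (g 0 1 : ℝ) / (g 1 1 : ℝ) - (h 0 1 : ℝ) / (h 1 1 : ℝ) = (n : ℝ) := by
      rw [← hβ]; exact hβr
    rw [show ((h 1 1 : ℤ) : ℝ) = ((g 1 1 : ℤ) : ℝ) from by exact_mod_cast hDD'.symm] at h1
    have h2 : (g 0 1 : ℝ) - (h 0 1 : ℝ) = (n : ℝ) * ((g 1 1 : ℤ) : ℝ) := by
      field_simp at h1
      linarith
    exact_mod_cast h2
  have hB : (0:ℤ) ≤ g 0 1 := hg.2.2.2.1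
  have hB2 : g 0 1 < g 1 1 := hg.2.2.2.2.1
  have hB' : (0:ℤ) ≤ h 0 1 := hh.2.2.2.1
  have hB'2 : h 0 1 < h 1 1 := hh.2.2.2.2.1
  have hn0 : n = 0 := by
    have hlt1 : n * g 1 1 < 1 * g 1 1 := by
      rw [one_mul, ← hBB']
      omega
    have hlt2 : (-1) * g 1 1 < n * g 1 1 := by
      rw [neg_one_mul, ← hBB']
      omega
    have h1 : n < 1 := lt_of_mul_lt_mul_right (by linarith [hlt1]) (le_of_lt hD)
    have h2 : -1 < n := lt_of_mul_lt_mul_right (by linarith [hlt2]) (le_of_lt hD)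
    omega
  have hBeq : g 0 1 = h 0 1 := by
    rw [hn0, zero_mul] at hBB'
    omega
  have h10 : g 1 0 = h 1 0 := by rw [hg.1, hh.1]
  ext i k
  fin_cases i <;> fin_cases k
  exacts [hAA', hBeq, h10, hDD']
/-- **Proposition.** Properties of the set `C(N)`: (1) for `γ ∈ SL₂(ℤ)` and `g ∈ C(N)` there
is `h ∈ C(N)` with `j(gγz) = j(hz)`; (2) for `γ ∈ SL₂(ℤ)` and distinct `g, h ∈ C(N)` the
functions `z ↦ j(gγz)` and `z ↦ j(hγz)` are not identically equal; (3) for `g, h ∈ C(N)`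
there is `γ ∈ SL₂(ℤ)` with `j(gγz) = j(hz)`. -/
theorem Cset_jmap_props (j : UpperHalfPlane → ℂ) (hj : IsJFunction j) (N : ℤ) (hN : 0 < N) :
    (∀ (γ : SL(2, ℤ)) (g : Matrix (Fin 2) (Fin 2) ℤ), g ∈ Cset N →
      ∃ h ∈ Cset N, ∀ z, j (act g (γ • z)) = j (act h z)) ∧
    (∀ (γ : SL(2, ℤ)) (g h : Matrix (Fin 2) (Fin 2) ℤ), g ∈ Cset N → h ∈ Cset N → g ≠ h →
      ¬ ∀ z, j (act g (γ • z)) = j (act h (γ • z))) ∧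
    (∀ g h : Matrix (Fin 2) (Fin 2) ℤ, g ∈ Cset N → h ∈ Cset N →
      ∃ γ : SL(2, ℤ), ∀ z, j (act g (γ • z)) = j (act h z)) := by
  have slDet : ∀ γ : SL(2, ℤ), 0 < ((γ : Matrix (Fin 2) (Fin 2) ℤ)).det := fun γ => by
    rw [γ.2]; norm_num
  refine ⟨?_, ?_, ?_⟩
  · -- part (1)
    intro γ g hg
    have hdg : 0 < g.det := by rw [det_of_mem_Cset hg]; exact hN
    have hdM : 0 < (g * (γ : Matrix (Fin 2) (Fin 2) ℤ)).det := by
      rw [Matrix.det_mul, γ.2, mul_one]; exact hdg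
    have hcM : cont (g * (γ : Matrix (Fin 2) (Fin 2) ℤ)) = 1 := by
      rw [cont_mul_right γ g]; exact cont_of_mem_Cset hg
    obtain ⟨δ, h, hmem, hMeq⟩ := hermite _ hdM hcM
    have hdetM : (g * (γ : Matrix (Fin 2) (Fin 2) ℤ)).det = N := by
      rw [Matrix.det_mul, γ.2, mul_one, det_of_mem_Cset hg]
    rw [hdetM] at hmem
    refine ⟨h, hmem, fun z => ?_⟩
    have hdh : 0 < h.det := by rw [det_of_mem_Cset hmem]; exact hN
    rw [sl_smul_eq_act γ z, ← act_mul g _ hdg (slDet γ) z, hMeq,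
      act_mul _ h (slDet δ) hdh z, ← sl_smul_eq_act δ (act h z), hj.invariant]
  · -- part (2)
    intro γ g h hg hh hne hall
    apply hne
    apply Cset_act_inj j hj hN hg hh
    intro w
    have h1 := hall (γ⁻¹ • w)
    rwa [smul_inv_smul] at h1
  · -- part (3)
    intro g h hg hh
    have hdg : 0 < g.det := by rw [det_of_mem_Cset hg]; exact hN
    have hdh : 0 < h.det := by rw [det_of_mem_Cset hh]; exact hN
    obtain ⟨γ₁, δ₁, h₁⟩ := smith g hdg (cont_of_mem_Cset hg)
    obtain ⟨γ₂, δ₂, h₂⟩ := smith h hdh (cont_of_mem_Cset hh)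
    rw [det_of_mem_Cset hg] at h₁
    rw [det_of_mem_Cset hh] at h₂
    have hγc : (γ₁⁻¹ : SL(2, ℤ)).1 * (γ₁ : SL(2, ℤ)).1 = 1 := by
      rw [← Matrix.SpecialLinearGroup.coe_mul, inv_mul_cancel,
        Matrix.SpecialLinearGroup.coe_one]
    have hδc : (δ₂ : SL(2, ℤ)).1 * (δ₂⁻¹ : SL(2, ℤ)).1 = 1 := by
      rw [← Matrix.SpecialLinearGroup.coe_mul, mul_inv_cancel,
        Matrix.SpecialLinearGroup.coe_one]
    have key : g * ((δ₁ * δ₂⁻¹ : SL(2, ℤ)) : Matrix (Fin 2) (Fin 2) ℤ) =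
        ((γ₁⁻¹ * γ₂ : SL(2, ℤ)) : Matrix (Fin 2) (Fin 2) ℤ) * h := by
      calc g * ((δ₁ * δ₂⁻¹ : SL(2, ℤ)) : Matrix (Fin 2) (Fin 2) ℤ)
          = ((γ₁⁻¹ : SL(2, ℤ)).1 * (γ₁ : SL(2, ℤ)).1) * g *
              ((δ₁ : SL(2, ℤ)).1 * (δ₂⁻¹ : SL(2, ℤ)).1) := by
            rw [hγc, Matrix.SpecialLinearGroup.coe_mul, one_mul]
        _ = (γ₁⁻¹ : SL(2, ℤ)).1 * ((γ₁ : SL(2, ℤ)).1 * g * (δ₁ : SL(2, ℤ)).1) *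
              (δ₂⁻¹ : SL(2, ℤ)).1 := by
            simp only [mul_assoc]
        _ = (γ₁⁻¹ : SL(2, ℤ)).1 * ((γ₂ : SL(2, ℤ)).1 * h * (δ₂ : SL(2, ℤ)).1) *
              (δ₂⁻¹ : SL(2, ℤ)).1 := by rw [h₁, h₂]
        _ = ((γ₁⁻¹ : SL(2, ℤ)).1 * (γ₂ : SL(2, ℤ)).1) * h *
              ((δ₂ : SL(2, ℤ)).1 * (δ₂⁻¹ : SL(2, ℤ)).1) := by
            simp only [mul_assoc]
        _ = ((γ₁⁻¹ * γ₂ : SL(2, ℤ)) : Matrix (Fin 2) (Fin 2) ℤ) * h := by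
            rw [hδc, mul_one, Matrix.SpecialLinearGroup.coe_mul]
    refine ⟨δ₁ * δ₂⁻¹, fun z => ?_⟩
    rw [sl_smul_eq_act (δ₁ * δ₂⁻¹) z, ← act_mul g _ hdg (slDet _) z, key,
      act_mul _ h (slDet _) hdh z, ← sl_smul_eq_act (γ₁⁻¹ * γ₂) (act h z), hj.invariant]

end SingMod
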